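/- Let T be an odd positive integer, c an integer with c ≥ 0, α, ρ real with |α| < 1/2 and |ρ| ≤ (T−1)/(2T), and γ real with 0 < γ ≤ T. There is a constant C = C(c,T,α) > 0 such that for every integer k ≥ 1 and every z ∈ ℂ with Re z > 0 and Re(1/z) ≥ k/2: |𝓗_{c,T}(α,γ,ρ,k;z)| ≤ C. -/

import Mathlib

/-!
Since `γ ≤ T` and `Re(1/z) ≥ k/2`, the Gaussian factor has modulus at most `e^{-πx²/(2T)}`, and
`|α| < 1/2` gives `|e^{2πxα}| ≤ e^{π|x|}`. Since `|ρ| ≤ (T-1)/(2T)`, the denominator satisfies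
`|cosh(π(x+iρ))| ≥ Re cosh(π(x+iρ)) = cosh(πx) cos(πρ) ≥ sin(π/(2T)) > 0`. With
`(|x|+1)^c ≤ e^{c|x|}`, the integrand is therefore dominated, uniformly in `ρ, γ, k, z`, by a
multiple of `e^{-πx²/(4T)}` depending only on `c` and `T`.
-/

open Complex Real

/-- `𝓗_{c,T}(α,γ,ρ,k;z) = ∫_ℝ (x+iρ)^c·e^{−πTx²/(γ²kz)+2πxα}/cosh(π(x+iρ)) dx`. -/
noncomputable def mordellH' (T c : ℕ) (α γ ρ : ℝ) (k : ℕ) (z : ℂ) : ℂ :=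
  ∫ x : ℝ, ((x : ℂ) + I * ρ) ^ c *
      Complex.exp (-(π : ℂ) * T * x ^ 2 / (γ ^ 2 * k * z) + 2 * π * x * α) /
    Complex.cosh (π * ((x : ℂ) + I * ρ))

lemma Complex.cosh_add_mul_I_re (x y : ℝ) :
    (Complex.cosh (x + y * I)).re = Real.cosh x * Real.cos y := by
  rw [Complex.cosh_add, Complex.cosh_mul_I, Complex.sinh_mul_I, ← Complex.ofReal_cosh,
    ← Complex.ofReal_cos, ← Complex.ofReal_sinh, ← Complex.ofReal_sin]
  simp [Complex.cos_ofReal_re]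

lemma Complex.cos_le_norm_cosh_add_mul_I (x y : ℝ) :
    Real.cos y ≤ ‖Complex.cosh (x + y * I)‖ := by
  rcases lt_or_ge (Real.cos y) 0 with hneg | hnonneg
  · exact hneg.le.trans (norm_nonneg _)
  calc Real.cos y ≤ Real.cosh x * Real.cos y :=
        le_mul_of_one_le_left hnonneg (Real.one_le_cosh x)
    _ = (Complex.cosh (x + y * I)).re := (Complex.cosh_add_mul_I_re x y).symm
    _ ≤ ‖Complex.cosh (x + y * I)‖ := Complex.re_le_norm _

lemma Real.sin_le_cos_of_abs_le {a y : ℝ} (ha : 0 ≤ a) (hy : |y| ≤ π / 2 - a) :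
    Real.sin a ≤ Real.cos y := by
  rw [← Real.cos_abs y, ← Real.cos_pi_div_two_sub]
  exact Real.cos_le_cos_of_nonneg_of_le_pi (abs_nonneg y) (by linarith [Real.pi_pos]) hy

lemma Real.sin_pi_div_two_mul_natCast_pos {n : ℕ} (hn : 0 < n) : 0 < Real.sin (π / (2 * n)) := by
  have hn' : (1 : ℝ) ≤ n := by exact_mod_cast hn
  apply Real.sin_pos_of_pos_of_lt_pi (by positivity)
  rw [div_lt_iff₀ (by positivity)]
  nlinarith [Real.pi_pos]

lemma Complex.re_neg_ofReal_div_le {r m : ℝ} {z : ℂ} (hr : 0 ≤ r) (hz : m ≤ (1 / z).re) :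
    (-(r : ℂ) / z).re ≤ -r * m := by
  rw [neg_div, div_eq_mul_one_div, Complex.neg_re, Complex.re_ofReal_mul, ← neg_mul]
  exact mul_le_mul_of_nonpos_left hz (neg_nonpos.2 hr)

lemma Real.mul_abs_sub_mul_sq_le (b : ℝ) {a : ℝ} (ha : 0 < a) (x : ℝ) :
    b * |x| - a * x ^ 2 ≤ b ^ 2 / (4 * a) := by
  rw [le_div_iff₀ (by positivity), ← sq_abs x]
  nlinarith [sq_nonneg (2 * a * |x| - b)]

lemma Real.add_one_pow_le_exp_mul {t : ℝ} (ht : -1 ≤ t) (n : ℕ) :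
    (t + 1) ^ n ≤ Real.exp (n * t) := by
  rw [Real.exp_nat_mul]
  exact pow_le_pow_left₀ (by linarith) (Real.add_one_le_exp t) n

lemma Complex.norm_ofReal_add_I_mul_le {ρ : ℝ} (hρ : |ρ| ≤ 1) (x : ℝ) :
    ‖(x : ℂ) + I * ρ‖ ≤ |x| + 1 := by
  calc ‖(x : ℂ) + I * ρ‖ ≤ ‖(x : ℂ)‖ + ‖I * ρ‖ := norm_add_le _ _
    _ ≤ |x| + 1 := by simpa [Complex.norm_real] using hρ

section MordellIntegrand

variable {T : ℕ} {α γ ρ : ℝ} {k : ℕ} {z : ℂ}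

lemma re_mordell_exponent_le (hα : |α| ≤ 1 / 2) (hγ : 0 < γ) (hγT : γ ≤ T) (hk : 1 ≤ k)
    (hz : (k : ℝ) / 2 ≤ (1 / z).re) (x : ℝ) :
    (-(π : ℂ) * T * x ^ 2 / (γ ^ 2 * k * z) + 2 * π * x * α).re ≤
      π * |x| - π / (2 * T) * x ^ 2 := by
  have hk' : (0 : ℝ) < k := by exact_mod_cast hk
  have hT : (0 : ℝ) < T := hγ.trans_le hγT
  have hsplit : -(π : ℂ) * T * x ^ 2 / (γ ^ 2 * k * z) + 2 * π * x * α =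
      -((π * T * x ^ 2 / (γ ^ 2 * k) : ℝ) : ℂ) / z + ((2 * π * x * α : ℝ) : ℂ) := by
    push_cast
    ring
  have hgauss : -(π * T * x ^ 2 / (γ ^ 2 * k)) * (k / 2) ≤ -(π / (2 * T) * x ^ 2) := by
    have hγT2 : γ ^ 2 ≤ (T : ℝ) ^ 2 := pow_le_pow_left₀ hγ.le hγT 2
    have : π / (2 * T) * x ^ 2 ≤ π * T * x ^ 2 / (2 * γ ^ 2) := by
      rw [div_mul_eq_mul_div, div_le_div_iff₀ (by positivity) (by positivity)]
      nlinarith [mul_nonneg Real.pi_pos.le (sq_nonneg x)]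
    calc -(π * T * x ^ 2 / (γ ^ 2 * k)) * (k / 2) = -(π * T * x ^ 2 / (2 * γ ^ 2)) := by
          field_simp
      _ ≤ _ := neg_le_neg this
  have hlin : 2 * π * x * α ≤ π * |x| := by
    have : x * α ≤ |x| / 2 := by
      calc x * α ≤ |x| * |α| := (le_abs_self _).trans (abs_mul x α).le
        _ ≤ |x| * (1 / 2) := mul_le_mul_of_nonneg_left hα (abs_nonneg x)
        _ = |x| / 2 := by ring
    nlinarith [Real.pi_pos]
  have hre := Complex.re_neg_ofReal_div_le (r := π * T * x ^ 2 / (γ ^ 2 * k)) (by positivity) hz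
  rw [hsplit, Complex.add_re, Complex.ofReal_re]
  linarith

lemma sin_pi_div_two_mul_le_norm_cosh (hT : 0 < T) (hρ : |ρ| ≤ ((T : ℝ) - 1) / (2 * T))
    (x : ℝ) : Real.sin (π / (2 * T)) ≤ ‖Complex.cosh (π * ((x : ℂ) + I * ρ))‖ := by
  have hT' : (0 : ℝ) < T := by exact_mod_cast hT
  have hρπ : |π * ρ| ≤ π / 2 - π / (2 * T) := by
    rw [abs_mul, abs_of_pos Real.pi_pos]
    calc π * |ρ| ≤ π * (((T : ℝ) - 1) / (2 * T)) :=
          mul_le_mul_of_nonneg_left hρ Real.pi_pos.le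
      _ = π / 2 - π / (2 * T) := by field_simp
  have harg : (π : ℂ) * ((x : ℂ) + I * ρ) = ((π * x : ℝ) : ℂ) + ((π * ρ : ℝ) : ℂ) * I := by
    push_cast
    ring
  rw [harg]
  exact (Real.sin_le_cos_of_abs_le (by positivity) hρπ).trans
    (Complex.cos_le_norm_cosh_add_mul_I _ _)

lemma norm_mordell_integrand_le (c : ℕ) (hT : 0 < T) (hα : |α| ≤ 1 / 2)
    (hρ : |ρ| ≤ ((T : ℝ) - 1) / (2 * T)) (hγ : 0 < γ) (hγT : γ ≤ T) (hk : 1 ≤ k)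
    (hz : (k : ℝ) / 2 ≤ (1 / z).re) (x : ℝ) :
    ‖((x : ℂ) + I * ρ) ^ c *
        Complex.exp (-(π : ℂ) * T * x ^ 2 / (γ ^ 2 * k * z) + 2 * π * x * α) /
      Complex.cosh (π * ((x : ℂ) + I * ρ))‖ ≤
    Real.exp ((c + π) ^ 2 * T / π) / Real.sin (π / (2 * T)) *
      Real.exp (-(π / (4 * T)) * x ^ 2) := by
  have hT' : (0 : ℝ) < T := by exact_mod_cast hT
  have hρ1 : |ρ| ≤ 1 := hρ.trans <| by
    rw [div_le_one (by positivity)]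
    linarith
  have hsq := Real.mul_abs_sub_mul_sq_le (c + π) (a := π / (4 * T)) (by positivity) x
  have hnum : ‖(x : ℂ) + I * ρ‖ ^ c *
      Real.exp (-(π : ℂ) * T * x ^ 2 / (γ ^ 2 * k * z) + 2 * π * x * α).re ≤
      Real.exp ((c + π) ^ 2 * T / π) * Real.exp (-(π / (4 * T)) * x ^ 2) :=
    calc _ ≤ (|x| + 1) ^ c * Real.exp (π * |x| - π / (2 * T) * x ^ 2) :=
          mul_le_mul (pow_le_pow_left₀ (norm_nonneg _) (norm_ofReal_add_I_mul_le hρ1 x) c)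
            (Real.exp_le_exp.2 (re_mordell_exponent_le hα hγ hγT hk hz x))
            (Real.exp_pos _).le (by positivity)
      _ ≤ Real.exp (c * |x|) * Real.exp (π * |x| - π / (2 * T) * x ^ 2) :=
          mul_le_mul_of_nonneg_right
            (Real.add_one_pow_le_exp_mul (by linarith [abs_nonneg x]) c) (Real.exp_pos _).le
      _ = Real.exp ((c + π) * |x| - π / (4 * T) * x ^ 2) *
            Real.exp (-(π / (4 * T)) * x ^ 2) := by
          rw [← Real.exp_add, ← Real.exp_add]
          congr 1
          field_simp
          ring
      _ ≤ _ := by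
          gcongr
          exact hsq.trans_eq (by field_simp)
  rw [norm_div, norm_mul, norm_pow, Complex.norm_exp, div_mul_eq_mul_div]
  exact div_le_div₀ (by positivity) hnum (Real.sin_pi_div_two_mul_natCast_pos hT)
    (sin_pi_div_two_mul_le_norm_cosh hT hρ x)

end MordellIntegrand

theorem H_bounded_general (T : ℕ) (hTpos : 0 < T) (c : ℕ)
    (α : ℝ) (hα : |α| < 1 / 2) :
    ∃ C > 0, ∀ ρ : ℝ, |ρ| ≤ ((T : ℝ) - 1) / (2 * T) →
      ∀ γ : ℝ, 0 < γ → γ ≤ T →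
      ∀ k : ℕ, 1 ≤ k → ∀ z : ℂ, 0 < z.re → (k : ℝ) / 2 ≤ (1 / z).re →
        ‖mordellH' T c α γ ρ k z‖ ≤ C := by
  have hT : (0 : ℝ) < T := by exact_mod_cast hTpos
  have hsin := Real.sin_pi_div_two_mul_natCast_pos hTpos
  set K := Real.exp ((c + π) ^ 2 * T / π) / Real.sin (π / (2 * T))
  refine ⟨K * √(π / (π / (4 * T))), by positivity, ?_⟩
  intro ρ hρ γ hγ hγT k hk z _ hz
  calc ‖mordellH' T c α γ ρ k z‖ ≤ ∫ x : ℝ, K * Real.exp (-(π / (4 * T)) * x ^ 2) :=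
        MeasureTheory.norm_integral_le_of_norm_le
          ((integrable_exp_neg_mul_sq (by positivity)).const_mul K)
          (Filter.Eventually.of_forall
            (norm_mordell_integrand_le c hTpos hα.le hρ hγ hγT hk hz))
    _ = K * √(π / (π / (4 * T))) := by
        rw [MeasureTheory.integral_const_mul, integral_gaussian]

/-- `𝓗_{c,T}(α,γ,ρ,k;z)` is bounded by a constant depending only on `c`, `T`, `α`. -/
theorem H_bounded (T : ℕ) (hT : Odd T) (hTpos : 0 < T) (c : ℕ)
    (α : ℝ) (hα : |α| < 1 / 2) :
    ∃ C > 0, ∀ ρ : ℝ, |ρ| ≤ ((T : ℝ) - 1) / (2 * T) →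
      ∀ γ : ℝ, 0 < γ → γ ≤ T →
      ∀ k : ℕ, 1 ≤ k → ∀ z : ℂ, 0 < z.re → (k : ℝ) / 2 ≤ (1 / z).re →
        ‖mordellH' T c α γ ρ k z‖ ≤ C :=
  H_bounded_general T hTpos c α hα
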